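/- For all finite hypergraphs H1 and H2, the Cartesian product H1□H2 is connected if and only if both H1 and H2 are connected. -/

import Mathlib

/-!
Basic definitions: finite hypergraphs (a finite nonempty vertex set `V`, given by
`[Fintype V] [Nonempty V]`, together with a set of nonempty edges), walks, distance,
connectedness, simplicity, rank, colorings, Helly property, covers,
the various hypergraph products, 2-sections, and graph products.
-/

/-- A hypergraph on a vertex type `V`: a collection of nonempty edges (finite subsets of `V`). -/
structure FinHypergraph (V : Type*) where
  edges : Set (Finset V)
  nonempty_edges : ∀ e ∈ edges, e.Nonempty

namespace FinHypergraph

variable {V V₁ V₂ : Type*}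

/-- There is a walk of length `n` from `u` to `v`: a sequence of vertices `w 0, …, w n`
and edges `f 1, …, f n` with consecutive vertices distinct and both contained
in the corresponding edge. -/
def HasWalk (H : FinHypergraph V) (u v : V) (n : ℕ) : Prop :=
  ∃ (w : Fin (n + 1) → V) (f : Fin n → Finset V),
    w 0 = u ∧ w (Fin.last n) = v ∧
      ∀ i : Fin n, f i ∈ H.edges ∧ w i.castSucc ≠ w i.succ ∧
        w i.castSucc ∈ f i ∧ w i.succ ∈ f i

/-- The distance between two vertices: the minimum length of a walk joining them,
`⊤ = ∞` if there is none. -/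
noncomputable def dist (H : FinHypergraph V) (u v : V) : ℕ∞ :=
  sInf {x : ℕ∞ | ∃ n : ℕ, x = n ∧ H.HasWalk u v n}

/-- A hypergraph is connected if any two vertices are joined by a walk. -/
def Connected (H : FinHypergraph V) : Prop := ∀ u v : V, ∃ n, H.HasWalk u v n

/-- A hypergraph is simple if every edge has at least two vertices and
no edge is contained in another edge. -/
def Simple (H : FinHypergraph V) : Prop :=
  (∀ e ∈ H.edges, 2 ≤ e.card) ∧ ∀ e ∈ H.edges, ∀ f ∈ H.edges, e ⊆ f → e = f

/-- A hypergraph is loopless if every edge has at least two vertices. -/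
def Loopless (H : FinHypergraph V) : Prop := ∀ e ∈ H.edges, 2 ≤ e.card

/-- The rank: the maximum cardinality of an edge. -/
noncomputable def rank (H : FinHypergraph V) : ℕ := sSup (Finset.card '' H.edges)

/-- The anti-rank: the minimum cardinality of an edge. -/
noncomputable def antirank (H : FinHypergraph V) : ℕ := sInf (Finset.card '' H.edges)

/-- A proper coloring: no color class contains an edge. -/
def IsProperColoring (H : FinHypergraph V) {k : ℕ} (c : V → Fin k) : Prop :=
  ∀ e ∈ H.edges, ∀ i : Fin k, ¬ ∀ v ∈ e, c v = i

/-- A proper strong coloring: a proper coloring in which the vertices of every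
edge receive pairwise distinct colors. -/
def IsStrongColoring (H : FinHypergraph V) {k : ℕ} (c : V → Fin k) : Prop :=
  H.IsProperColoring c ∧ ∀ e ∈ H.edges, ∀ u ∈ e, ∀ v ∈ e, u ≠ v → c u ≠ c v

/-- The chromatic number: the least `k` admitting a proper `k`-coloring. -/
noncomputable def chromaticNumber (H : FinHypergraph V) : ℕ :=
  sInf {k : ℕ | ∃ c : V → Fin k, H.IsProperColoring c}

/-- The strong chromatic number: the least `k` admitting a proper strong `k`-coloring. -/
noncomputable def strongChromaticNumber (H : FinHypergraph V) : ℕ :=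
  sInf {k : ℕ | ∃ c : V → Fin k, H.IsStrongColoring c}

/-- The Helly property: every intersecting family of edges is a star. -/
def Helly (H : FinHypergraph V) : Prop :=
  ∀ E' ⊆ H.edges, (∀ e ∈ E', ∀ f ∈ E', ∃ x, x ∈ e ∧ x ∈ f) → ∃ v, ∀ e ∈ E', v ∈ e

/-- The covering number: the minimum cardinality of a set of vertices meeting every edge. -/
noncomputable def coverNumber (H : FinHypergraph V) : ℕ :=
  sInf {k : ℕ | ∃ T : Finset V, T.card = k ∧ ∀ e ∈ H.edges, ∃ v ∈ T, v ∈ e}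

/-- The Cartesian product of hypergraphs. -/
def cartProd (H₁ : FinHypergraph V₁) (H₂ : FinHypergraph V₂) : FinHypergraph (V₁ × V₂) where
  edges := {E | (∃ x, ∃ f ∈ H₂.edges, E = {x} ×ˢ f) ∨ ∃ e ∈ H₁.edges, ∃ y, E = e ×ˢ {y}}
  nonempty_edges := by
    rintro E (⟨x, f, hf, rfl⟩ | ⟨e, he, y, rfl⟩)
    · exact (Finset.singleton_nonempty x).product (H₂.nonempty_edges f hf)
    · exact (H₁.nonempty_edges e he).product (Finset.singleton_nonempty y)

section Products

variable [DecidableEq V₁] [DecidableEq V₂]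

/-- The minimal-rank-preserving direct product `H₁ ×̌ H₂`. -/
def minDirProd (H₁ : FinHypergraph V₁) (H₂ : FinHypergraph V₂) : FinHypergraph (V₁ × V₂) where
  edges := {E | ∃ e₁ ∈ H₁.edges, ∃ e₂ ∈ H₂.edges,
    E ⊆ e₁ ×ˢ e₂ ∧ E.card = min e₁.card e₂.card ∧
      (E.image Prod.fst).card = min e₁.card e₂.card ∧
      (E.image Prod.snd).card = min e₁.card e₂.card}
  nonempty_edges := by
    rintro E ⟨e₁, h₁, e₂, h₂, -, hc, -, -⟩
    rw [← Finset.card_pos, hc]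
    exact lt_min (Finset.card_pos.mpr (H₁.nonempty_edges e₁ h₁))
      (Finset.card_pos.mpr (H₂.nonempty_edges e₂ h₂))

/-- The maximal-rank-preserving direct product `H₁ ×̂ H₂`. -/
def maxDirProd (H₁ : FinHypergraph V₁) (H₂ : FinHypergraph V₂) : FinHypergraph (V₁ × V₂) where
  edges := {E | ∃ e₁ ∈ H₁.edges, ∃ e₂ ∈ H₂.edges,
    E ⊆ e₁ ×ˢ e₂ ∧ E.card = max e₁.card e₂.card ∧
      E.image Prod.fst = e₁ ∧ E.image Prod.snd = e₂}
  nonempty_edges := by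
    rintro E ⟨e₁, h₁, e₂, h₂, -, hc, -, -⟩
    rw [← Finset.card_pos, hc]
    exact lt_max_iff.mpr (Or.inl (Finset.card_pos.mpr (H₁.nonempty_edges e₁ h₁)))

/-- The non-rank-preserving direct product `H₁ ×̃ H₂`. -/
def nrDirProd (H₁ : FinHypergraph V₁) (H₂ : FinHypergraph V₂) : FinHypergraph (V₁ × V₂) where
  edges := {E | ∃ e ∈ H₁.edges, ∃ f ∈ H₂.edges, ∃ x ∈ e, ∃ y ∈ f,
    E = insert (x, y) ((e.erase x) ×ˢ (f.erase y))}
  nonempty_edges := by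
    rintro E ⟨e, -, f, -, x, -, y, -, rfl⟩
    exact Finset.insert_nonempty _ _

/-- The normal product `H₁ ⊠̌ H₂`: union of the Cartesian product edges and the
minimal-rank-preserving direct product edges. -/
def normalProd (H₁ : FinHypergraph V₁) (H₂ : FinHypergraph V₂) : FinHypergraph (V₁ × V₂) where
  edges := (H₁.cartProd H₂).edges ∪ (H₁.minDirProd H₂).edges
  nonempty_edges := by
    rintro E (h | h)
    · exact (H₁.cartProd H₂).nonempty_edges E h
    · exact (H₁.minDirProd H₂).nonempty_edges E h

/-- The strong product `H₁ ⊠̂ H₂`: union of the Cartesian product edges and the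
maximal-rank-preserving direct product edges. -/
def strongProd (H₁ : FinHypergraph V₁) (H₂ : FinHypergraph V₂) : FinHypergraph (V₁ × V₂) where
  edges := (H₁.cartProd H₂).edges ∪ (H₁.maxDirProd H₂).edges
  nonempty_edges := by
    rintro E (h | h)
    · exact (H₁.cartProd H₂).nonempty_edges E h
    · exact (H₁.maxDirProd H₂).nonempty_edges E h

/-- The lexicographic product `H₁ ∘ H₂`. -/
def lexProd (H₁ : FinHypergraph V₁) (H₂ : FinHypergraph V₂) : FinHypergraph (V₁ × V₂) where
  edges := {E | (E.image Prod.fst ∈ H₁.edges ∧ (E.image Prod.fst).card = E.card) ∨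
    ∃ x, ∃ e₂ ∈ H₂.edges, E = {x} ×ˢ e₂}
  nonempty_edges := by
    rintro E (⟨h₁, hc⟩ | ⟨x, e₂, h₂, rfl⟩)
    · rw [← Finset.card_pos, ← hc]
      exact Finset.card_pos.mpr (H₁.nonempty_edges _ h₁)
    · exact (Finset.singleton_nonempty x).product (H₂.nonempty_edges e₂ h₂)

end Products

/-- The square product `H₁ ■ H₂`. -/
def squareProd (H₁ : FinHypergraph V₁) (H₂ : FinHypergraph V₂) : FinHypergraph (V₁ × V₂) where
  edges := {E | ∃ e₁ ∈ H₁.edges, ∃ e₂ ∈ H₂.edges, E = e₁ ×ˢ e₂}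
  nonempty_edges := by
    rintro E ⟨e₁, h₁, e₂, h₂, rfl⟩
    exact (H₁.nonempty_edges e₁ h₁).product (H₂.nonempty_edges e₂ h₂)

/-- The 2-section of a hypergraph: distinct vertices are adjacent iff they lie
in a common edge. -/
def twoSection (H : FinHypergraph V) : SimpleGraph V where
  Adj x y := x ≠ y ∧ ∃ e ∈ H.edges, x ∈ e ∧ y ∈ e
  symm := Std.Symm.mk <| by rintro x y ⟨hxy, e, he, hx, hy⟩; exact ⟨hxy.symm, e, he, hy, hx⟩
  loopless := Std.Irrefl.mk <| by rintro x ⟨hx, -⟩; exact hx rfl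

end FinHypergraph

namespace SimpleGraph

variable {V₁ V₂ : Type*}

/-- The direct (tensor) product of simple graphs. -/
def directProd (G₁ : SimpleGraph V₁) (G₂ : SimpleGraph V₂) : SimpleGraph (V₁ × V₂) where
  Adj x y := G₁.Adj x.1 y.1 ∧ G₂.Adj x.2 y.2
  symm := ⟨fun _ _ ⟨h₁, h₂⟩ => ⟨h₁.symm, h₂.symm⟩⟩
  loopless := ⟨fun x h => G₁.loopless.irrefl x.1 h.1⟩

/-- The strong product of simple graphs. -/
def strongGraphProd (G₁ : SimpleGraph V₁) (G₂ : SimpleGraph V₂) : SimpleGraph (V₁ × V₂) where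
  Adj x y := x ≠ y ∧ ((x.1 = y.1 ∧ G₂.Adj x.2 y.2) ∨ (x.2 = y.2 ∧ G₁.Adj x.1 y.1) ∨
    (G₁.Adj x.1 y.1 ∧ G₂.Adj x.2 y.2))
  symm := Std.Symm.mk <| by
    rintro x y ⟨hne, (⟨h, h'⟩ | ⟨h, h'⟩ | ⟨h, h'⟩)⟩
    · exact ⟨hne.symm, Or.inl ⟨h.symm, h'.symm⟩⟩
    · exact ⟨hne.symm, Or.inr (Or.inl ⟨h.symm, h'.symm⟩)⟩
    · exact ⟨hne.symm, Or.inr (Or.inr ⟨h.symm, h'.symm⟩)⟩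
  loopless := Std.Irrefl.mk <| by rintro x ⟨hx, -⟩; exact hx rfl

/-- The lexicographic product of simple graphs. -/
def lexGraphProd (G₁ : SimpleGraph V₁) (G₂ : SimpleGraph V₂) : SimpleGraph (V₁ × V₂) where
  Adj x y := G₁.Adj x.1 y.1 ∨ (x.1 = y.1 ∧ G₂.Adj x.2 y.2)
  symm := Std.Symm.mk <| by
    rintro x y (h | ⟨h, h'⟩)
    · exact Or.inl h.symm
    · exact Or.inr ⟨h.symm, h'.symm⟩
  loopless := Std.Irrefl.mk <| by
    rintro x (h | ⟨-, h⟩)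
    · exact G₁.loopless.irrefl x.1 h
    · exact G₂.loopless.irrefl x.2 h

end SimpleGraph

/-!
A walk in a hypergraph is exactly a walk in its 2-section, and the 2-section of `H₁ □ H₂` is
the box product of the 2-sections; so the statement reduces to the corresponding fact about
connectivity of box products of simple graphs.
-/

namespace SimpleGraph

variable {V : Type*} {G : SimpleGraph V} {u v : V} {n : ℕ}

theorem Walk.exists_length_eq_succ_iff :
    (∃ p : G.Walk u v, p.length = n + 1) ↔ ∃ w, G.Adj u w ∧ ∃ q : G.Walk w v, q.length = n := by
  constructor
  · rintro ⟨_ | ⟨h, q⟩, hq⟩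
    · simp at hq
    · exact ⟨_, h, q, by simpa using hq⟩
  · rintro ⟨w, h, q, rfl⟩
    exact ⟨.cons h q, rfl⟩

end SimpleGraph

namespace FinHypergraph

variable {V V₁ V₂ : Type*} {H : FinHypergraph V} {u v : V} {n : ℕ}

theorem hasWalk_zero_iff : H.HasWalk u v 0 ↔ u = v := by
  constructor
  · rintro ⟨w, -, rfl, rfl, -⟩
    rfl
  · rintro rfl
    exact ⟨fun _ => u, Fin.elim0, rfl, rfl, fun i => i.elim0⟩

theorem hasWalk_succ_iff :
    H.HasWalk u v (n + 1) ↔ ∃ w, H.twoSection.Adj u w ∧ H.HasWalk w v n := by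
  constructor
  · rintro ⟨w, f, rfl, rfl, hstep⟩
    obtain ⟨he, hne, hu, hw⟩ := hstep 0
    refine ⟨w 1, ⟨hne, f 0, he, hu, hw⟩, Fin.tail w, Fin.tail f, rfl, rfl, fun i => ?_⟩
    simpa only [Fin.tail, Fin.succ_castSucc] using hstep i.succ
  · rintro ⟨w, ⟨hne, e, he, hu, hw⟩, w', f, rfl, rfl, hstep⟩
    refine ⟨Fin.cons u w', Fin.cons e f, rfl, by simp [← Fin.succ_last], fun i => ?_⟩
    cases i using Fin.cases with
    | zero => exact ⟨he, hne, hu, hw⟩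
    | succ i => simpa only [Fin.cons_succ, ← Fin.succ_castSucc] using hstep i

theorem hasWalk_iff_exists_walk_length :
    H.HasWalk u v n ↔ ∃ p : H.twoSection.Walk u v, p.length = n := by
  induction n generalizing u with
  | zero => rw [hasWalk_zero_iff, SimpleGraph.Walk.exists_length_eq_zero_iff]
  | succ n ih => simp only [hasWalk_succ_iff, SimpleGraph.Walk.exists_length_eq_succ_iff, ih]

theorem connected_iff_preconnected_twoSection : H.Connected ↔ H.twoSection.Preconnected :=
  forall₂_congr fun _ _ => by
    simp only [hasWalk_iff_exists_walk_length]
    exact ⟨fun ⟨_, p, _⟩ => ⟨p⟩, fun ⟨p⟩ => ⟨_, p, rfl⟩⟩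

theorem twoSection_cartProd (H₁ : FinHypergraph V₁) (H₂ : FinHypergraph V₂) :
    (H₁.cartProd H₂).twoSection = H₁.twoSection □ H₂.twoSection := by
  ext ⟨a₁, a₂⟩ ⟨b₁, b₂⟩
  simp only [twoSection, cartProd, SimpleGraph.boxProd_adj]
  constructor
  · rintro ⟨hne, E, ⟨x, f, hf, rfl⟩ | ⟨e, he, y, rfl⟩, ha, hb⟩ <;>
      simp only [Finset.mem_product, Finset.mem_singleton] at ha hb
    · obtain ⟨rfl, ha⟩ := ha
      obtain ⟨rfl, hb⟩ := hb
      exact .inr ⟨⟨by simpa using hne, f, hf, ha, hb⟩, rfl⟩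
    · obtain ⟨ha, rfl⟩ := ha
      obtain ⟨hb, rfl⟩ := hb
      exact .inl ⟨⟨by simpa using hne, e, he, ha, hb⟩, rfl⟩
  · rintro (⟨⟨hne, e, he, ha, hb⟩, rfl⟩ | ⟨⟨hne, f, hf, ha, hb⟩, rfl⟩)
    · exact ⟨by simpa, e ×ˢ {a₂}, .inr ⟨e, he, a₂, rfl⟩, by simpa, by simpa⟩
    · exact ⟨by simpa, {a₁} ×ˢ f, .inl ⟨a₁, f, hf, rfl⟩, by simpa, by simpa⟩

end FinHypergraph

theorem connected_cartProd_iff_general {V₁ V₂ : Type*} [Nonempty V₁]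
    [Nonempty V₂] (H₁ : FinHypergraph V₁) (H₂ : FinHypergraph V₂) :
    (H₁.cartProd H₂).Connected ↔ H₁.Connected ∧ H₂.Connected := by
  simp only [FinHypergraph.connected_iff_preconnected_twoSection,
    FinHypergraph.twoSection_cartProd]
  exact ⟨fun h => ⟨h.ofBoxProdLeft, h.ofBoxProdRight⟩, fun h => h.1.boxProd h.2⟩

/-- the Cartesian product of hypergraphs is connected iff both factors are. -/
theorem connected_cartProd_iff {V₁ V₂ : Type*} [Fintype V₁] [Nonempty V₁]
    [Fintype V₂] [Nonempty V₂] (H₁ : FinHypergraph V₁) (H₂ : FinHypergraph V₂) :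
    (H₁.cartProd H₂).Connected ↔ H₁.Connected ∧ H₂.Connected :=
  connected_cartProd_iff_general H₁ H₂
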